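/- arXiv:1307.5396 — 9 statements merged into one kernel-verified Lean document; each statement's English description precedes it below -/
import Mathlib

section
/- Let λ ∈ ℝ^Q with 0 < λi < 1 for all i and Q ≥ 2, and let P = Δ + λλᵀ with Δ diagonal with entries 1 − λi². Then P⁻¹ is a complete M-matrix: its diagonal entries are positive and all its off-diagonal entries are strictly negative. -/
open Matrix

private lemma aux_diag (di li s : ℝ) (hdi : di ≠ 0) (hc : (1:ℝ) + s ≠ 0) :
    di * (1 / di - li / di * (li / di) / (1 + s)) + li * (li / di - li / di * (s / (1 + s)))
      = 1 := by
  field_simp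
  ring

private lemma aux_off (di dk li lk s : ℝ) (hdi : di ≠ 0) (hdk : dk ≠ 0)
    (hc : (1:ℝ) + s ≠ 0) :
    di * (0 - li / di * (lk / dk) / (1 + s)) + li * (lk / dk - lk / dk * (s / (1 + s)))
      = 0 := by
  field_simp
  ring

/-- The inverse of the single-factor correlation matrix P = Δ + λλᵀ is a complete
M-matrix: positive diagonal and strictly negative off-diagonal entries. -/
theorem factor_inverse_is_complete_M_matrix
    (Q : ℕ) (hQ : 2 ≤ Q) (l : Fin Q → ℝ) (hl : ∀ i, 0 < l i ∧ l i < 1)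
    (P : Matrix (Fin Q) (Fin Q) ℝ)
    (hP : P = Matrix.diagonal (fun i => 1 - (l i) ^ 2) + Matrix.vecMulVec l l) :
    IsUnit P.det ∧ (∀ i, 0 < P⁻¹ i i) ∧ (∀ i j, i ≠ j → P⁻¹ i j < 0) := by
  set d : Fin Q → ℝ := fun i => 1 - (l i) ^ 2 with hd
  have hdpos : ∀ i, 0 < d i := by
    intro i
    have h1 := (hl i).1
    have h2 := (hl i).2
    show (0:ℝ) < 1 - l i ^ 2
    nlinarith
  have hdne : ∀ i, d i ≠ 0 := fun i => (hdpos i).ne'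
  set s : ℝ := ∑ j, (l j) ^ 2 / d j with hs
  have hsnn : 0 ≤ s := Finset.sum_nonneg fun j _ =>
    div_nonneg (sq_nonneg _) (hdpos j).le
  set c : ℝ := 1 + s with hc
  have hcpos : 0 < c := by linarith
  have hcne : c ≠ 0 := hcpos.ne'
  set B : Matrix (Fin Q) (Fin Q) ℝ :=
    Matrix.of (fun i j => (if i = j then 1 / d i else 0) - (l i / d i) * (l j / d j) / c)
    with hB
  have hPB : P * B = 1 := by
    ext i k
    rw [Matrix.mul_apply, hP]
    have key : ∀ j : Fin Q, (Matrix.diagonal d + Matrix.vecMulVec l l) i j * B j k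
        = (if i = j then d i else 0) * B j k + l i * (l j * B j k) := by
      intro j
      simp [Matrix.diagonal, Matrix.vecMulVec, Matrix.add_apply]
      split_ifs <;> ring
    simp only [key]
    rw [Finset.sum_add_distrib]
    have h1 : (∑ j, (if i = j then d i else 0) * B j k) = d i * B i k := by
      rw [Finset.sum_eq_single i]
      · simp
      · intro b _ hb; simp [Ne.symm hb]
      · simp
    have h2 : (∑ j, l i * (l j * B j k)) = l i * (l k / d k - (l k / d k) * (s / c)) := by
      rw [← Finset.mul_sum]
      congr 1
      have : ∀ j : Fin Q, l j * B j k
          = (if j = k then l j / d j else 0) - (l j ^ 2 / d j) * ((l k / d k) / c) := by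
        intro j
        simp [hB]
        by_cases h : j = k <;> simp [h] <;> ring
      simp only [this]
      rw [Finset.sum_sub_distrib]
      rw [Finset.sum_eq_single k (by intro b _ hb; simp [hb]) (by simp),
        ← Finset.sum_mul]
      simp [← hs]
      ring
    rw [h1, h2]
    have hBik : B i k = (if i = k then 1 / d i else 0) - (l i / d i) * (l k / d k) / c := rfl
    rw [hBik, hc]
    by_cases h : i = k
    · subst h
      rw [if_pos rfl, Matrix.one_apply_eq]
      have := aux_diag (d i) (l i) s (hdne i) (by rw [← hc]; exact hcne)
      linarith
    · simp only [if_neg h, Matrix.one_apply_ne h]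
      have := aux_off (d i) (d k) (l i) (l k) s (hdne i) (hdne k) (by rw [← hc]; exact hcne)
      linarith
  have hdet : IsUnit P.det := Matrix.isUnit_det_of_right_inverse hPB
  have hinv : P⁻¹ = B := Matrix.inv_eq_right_inv hPB
  refine ⟨hdet, ?_, ?_⟩
  · intro i
    rw [hinv]
    have hBii : B i i = 1 / d i - (l i / d i) * (l i / d i) / c := by simp [hB]
    rw [hBii]
    have hle : l i ^ 2 / d i ≤ s :=
      Finset.single_le_sum (f := fun j => l j ^ 2 / d j)
        (fun j _ => div_nonneg (sq_nonneg _) (hdpos j).le) (Finset.mem_univ i)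
    have hdi := hdpos i
    rw [sub_pos, div_lt_div_iff₀ hcpos hdi]
    have heq : l i / d i * (l i / d i) = l i ^ 2 / d i / d i := by ring
    rw [heq, div_mul_cancel₀ _ (hdne i), one_mul, hc]
    linarith
  · intro i j hij
    rw [hinv]
    have hBij : B i j = - ((l i / d i) * (l j / d j) / c) := by simp [hB, hij]
    rw [hBij]
    have h1 := (hl i).1
    have h2 := (hl j).1
    have := div_pos (mul_pos (div_pos h1 (hdpos i)) (div_pos h2 (hdpos j))) hcpos
    linarith
end

section
/- Let λ ∈ ℝ^Q with 0 < λi < 1, Q ≥ 4, and P = Δ + λλᵀ. Then the off-diagonal entries of P⁻¹ satisfy the vanishing tetrad conditions: (P⁻¹)ih·(P⁻¹)jk = (P⁻¹)jh·(P⁻¹)ik for all distinct i, j, h, k. -/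
open Matrix

/-- The off-diagonal entries of the inverse of the single-factor correlation matrix
satisfy the vanishing tetrad conditions. -/
theorem factor_inverse_vanishing_tetrads
    (Q : ℕ) (hQ : 4 ≤ Q) (l : Fin Q → ℝ) (hl : ∀ i, 0 < l i ∧ l i < 1)
    (P : Matrix (Fin Q) (Fin Q) ℝ)
    (hP : P = Matrix.diagonal (fun i => 1 - (l i) ^ 2) + Matrix.vecMulVec l l) :
    ∀ i j h k : Fin Q, i ≠ j → i ≠ h → i ≠ k → j ≠ h → j ≠ k → h ≠ k →
      P⁻¹ i h * P⁻¹ j k = P⁻¹ j h * P⁻¹ i k := by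
  have hpos : ∀ i, 0 < 1 - l i ^ 2 := by
    intro i
    have h1 := (hl i).1; have h2 := (hl i).2
    nlinarith
  obtain ⟨c, hc⟩ : ∃ c : Fin Q → ℝ, c = fun i => l i / (1 - l i ^ 2) := ⟨_, rfl⟩
  obtain ⟨s, hs⟩ : ∃ s : ℝ, s = 1 + ∑ i, l i * c i := ⟨_, rfl⟩
  have hlc : ∀ i, l i * c i ≥ 0 := by
    intro i
    rw [hc]
    exact mul_nonneg (le_of_lt (hl i).1) (div_nonneg (le_of_lt (hl i).1) (le_of_lt (hpos i)))
  have hspos : 0 < s := by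
    have h1 : (0:ℝ) ≤ ∑ i, l i * c i := Finset.sum_nonneg fun i _ => hlc i
    rw [hs]; linarith
  have hsne : s ≠ 0 := ne_of_gt hspos
  have hcmul : ∀ i, (1 - l i ^ 2) * c i = l i := by
    intro i
    rw [hc]
    rw [mul_comm, div_mul_eq_mul_div, mul_div_assoc, div_self (ne_of_gt (hpos i)), mul_one]
  have hcval : ∀ i, l i * (1 - l i ^ 2)⁻¹ = c i := by
    intro i; rw [hc]; exact (div_eq_mul_inv _ _).symm
  obtain ⟨M, hM⟩ : ∃ M : Matrix (Fin Q) (Fin Q) ℝ,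
      M = Matrix.diagonal (fun i => (1 - l i ^ 2)⁻¹) - s⁻¹ • Matrix.vecMulVec c c := ⟨_, rfl⟩
  have key : P * M = 1 := by
    ext i j
    rw [Matrix.mul_apply]
    have expand : ∀ k : Fin Q, P i k * M k j =
        (Matrix.diagonal (fun i => 1 - (l i) ^ 2) i k) * (Matrix.diagonal (fun i => (1 - l i ^ 2)⁻¹) k j)
        - (Matrix.diagonal (fun i => 1 - (l i) ^ 2) i k) * (s⁻¹ * (c k * c j))
        + (l i * l k) * (Matrix.diagonal (fun i => (1 - l i ^ 2)⁻¹) k j)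
        - (l i * l k) * (s⁻¹ * (c k * c j)) := by
      intro k
      rw [hP, hM]
      simp only [Matrix.add_apply, Matrix.sub_apply, Matrix.smul_apply,
        Matrix.vecMulVec_apply, smul_eq_mul]
      ring
    rw [Finset.sum_congr rfl (fun k _ => expand k)]
    rw [Finset.sum_sub_distrib, Finset.sum_add_distrib, Finset.sum_sub_distrib]
    have S1 : ∑ k, (Matrix.diagonal (fun i => 1 - (l i) ^ 2) i k) *
        (Matrix.diagonal (fun i => (1 - l i ^ 2)⁻¹) k j) = if i = j then 1 else 0 := by
      simp only [Matrix.diagonal_apply, ite_mul, mul_ite, zero_mul, mul_zero, ite_and]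
      rw [Finset.sum_ite_eq' _ j]
      simp only [Finset.mem_univ, if_true]
      by_cases hij : i = j
      · subst hij; simp [mul_inv_cancel₀ (ne_of_gt (hpos i))]
      · simp [hij]
    have S2 : ∑ k, (Matrix.diagonal (fun i => 1 - (l i) ^ 2) i k) * (s⁻¹ * (c k * c j))
        = (1 - l i ^ 2) * (s⁻¹ * (c i * c j)) := by
      simp only [Matrix.diagonal_apply, ite_mul, zero_mul]
      rw [Finset.sum_ite_eq _ i]
      simp
    have S3 : ∑ k, (l i * l k) * (Matrix.diagonal (fun i => (1 - l i ^ 2)⁻¹) k j)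
        = l i * (l j * (1 - l j ^ 2)⁻¹) := by
      simp only [Matrix.diagonal_apply, mul_ite, mul_zero]
      rw [Finset.sum_ite_eq' _ j]
      simp only [Finset.mem_univ, if_true]
      ring
    have S4 : ∑ k, (l i * l k) * (s⁻¹ * (c k * c j))
        = l i * s⁻¹ * c j * (s - 1) := by
      have h1 : ∀ k : Fin Q, (l i * l k) * (s⁻¹ * (c k * c j)) = (l i * s⁻¹ * c j) * (l k * c k) := by
        intro k; ring
      rw [Finset.sum_congr rfl (fun k _ => h1 k), ← Finset.mul_sum]
      have h2 : ∑ k, l k * c k = s - 1 := by rw [hs]; ring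
      rw [h2]
    rw [S1, S2, S3, S4, hcval j]
    have h0 : (1 - l i ^ 2) * (s⁻¹ * (c i * c j)) = l i * c j * s⁻¹ := by
      linear_combination (s⁻¹ * c j) * (hcmul i)
    have hss : s⁻¹ * s = 1 := inv_mul_cancel₀ hsne
    rw [Matrix.one_apply, h0]
    split_ifs with hij <;> linear_combination (-(l i * c j)) * hss
  have hPinv : P⁻¹ = M := Matrix.inv_eq_right_inv key
  intro i j h k hij hih hik hjh hjk hhk
  rw [hPinv, hM]
  simp only [Matrix.sub_apply, Matrix.smul_apply, Matrix.vecMulVec_apply, smul_eq_mul,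
    Matrix.diagonal_apply_ne _ hih, Matrix.diagonal_apply_ne _ hik,
    Matrix.diagonal_apply_ne _ hjh, Matrix.diagonal_apply_ne _ hjk]
  ring
end

section
/- If M is a symmetric invertible real matrix whose inverse M⁻¹ is a complete M-matrix (positive diagonal, strictly negative off-diagonal entries) and M is positive definite, then all entries of M are strictly positive. -/
/-!
Write `A = M⁻¹`: it is positive definite with negative off-diagonal entries, and the `j`-th
column `x` of `M` solves `A x = eⱼ ≥ 0`. Splitting `x = x⁺ - x⁻`, the sign pattern of `A` gives
`x⁻ ⬝ A x⁺ ≤ 0`, hence `x⁻ ⬝ A x⁻ = x⁻ ⬝ A x⁺ - x⁻ ⬝ A x ≤ 0`, so `x⁻ = 0` by definiteness.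
Finally, if some `xᵢ = 0`, then `(A x)ᵢ = ∑_{k ≠ i} Aᵢₖ xₖ < 0` because `x ≠ 0`, contradicting
`A x ≥ 0`.
-/

open Matrix

lemma negPart_mul_posPart {α : Type*} [Ring α] [LinearOrder α] [IsOrderedRing α] (a : α) :
    a⁻ * a⁺ = 0 := by
  rcases le_total a 0 with ha | ha
  · rw [posPart_eq_zero.mpr ha, mul_zero]
  · rw [negPart_eq_zero.mpr ha, zero_mul]

namespace Matrix

variable {n : Type*} [Fintype n] {A : Matrix n n ℝ}

lemma negPart_dotProduct_mulVec_posPart_nonpos (hZ : ∀ i j, i ≠ j → A i j ≤ 0) (x : n → ℝ) :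
    x⁻ ⬝ᵥ A *ᵥ x⁺ ≤ 0 := by
  simp only [dotProduct, mulVec, Finset.mul_sum]
  refine Finset.sum_nonpos fun i _ => Finset.sum_nonpos fun k _ => ?_
  rw [Pi.negPart_apply, Pi.posPart_apply]
  rcases eq_or_ne i k with rfl | hik
  · rw [mul_left_comm, negPart_mul_posPart, mul_zero]
  · exact mul_nonpos_of_nonneg_of_nonpos (negPart_nonneg _)
      (mul_nonpos_of_nonpos_of_nonneg (hZ i k hik) (posPart_nonneg _))

theorem PosDef.nonneg_of_mulVec_nonneg (hA : A.PosDef) (hZ : ∀ i j, i ≠ j → A i j ≤ 0)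
    {x : n → ℝ} (hAx : 0 ≤ A *ᵥ x) : 0 ≤ x := by
  have hsplit : x⁻ ⬝ᵥ A *ᵥ x⁺ - x⁻ ⬝ᵥ A *ᵥ x⁻ = x⁻ ⬝ᵥ A *ᵥ x := by
    rw [← dotProduct_sub, ← mulVec_sub, posPart_sub_negPart]
  have hcross : 0 ≤ x⁻ ⬝ᵥ A *ᵥ x := dotProduct_nonneg_of_nonneg (negPart_nonneg x) hAx
  have hquad : x⁻ ⬝ᵥ A *ᵥ x⁻ ≤ 0 := by
    linarith [negPart_dotProduct_mulVec_posPart_nonpos hZ x]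
  have hneg : x⁻ = 0 := by
    by_contra hne
    simpa using (hA.dotProduct_mulVec_pos hne).trans_le hquad
  exact negPart_eq_zero.mp hneg

theorem pos_of_mulVec_nonneg (hZ : ∀ i j, i ≠ j → A i j < 0) {x : n → ℝ} (hx : 0 ≤ x)
    (hx0 : x ≠ 0) (hAx : 0 ≤ A *ᵥ x) (i : n) : 0 < x i := by
  by_contra! hxi
  replace hxi : x i = 0 := le_antisymm hxi (hx i)
  obtain ⟨j, hj⟩ : ∃ j, x j ≠ 0 := Function.ne_iff.mp hx0
  have hij : i ≠ j := by rintro rfl; exact hj hxi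
  refine (hAx i).not_gt ?_
  simp only [mulVec, dotProduct]
  refine Finset.sum_neg' (fun k _ => ?_) ⟨j, Finset.mem_univ j, ?_⟩
  · rcases eq_or_ne i k with rfl | hik
    · rw [hxi, mul_zero]
    · exact mul_nonpos_of_nonpos_of_nonneg (hZ i k hik).le (hx k)
  · exact mul_neg_of_neg_of_pos (hZ i j hij) ((hx j).lt_of_ne' hj)

end Matrix

theorem inverse_M_matrix_implies_positive_entries_general
    {n : Type*} [Fintype n] [DecidableEq n]
    (M : Matrix n n ℝ) (hpd : M.PosDef)
    (hoff : ∀ i j, i ≠ j → M⁻¹ i j < 0) :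
    ∀ i j, 0 < M i j := by
  intro i j
  have hcol : M⁻¹ *ᵥ M.col j = Pi.single j 1 := by
    rw [← mulVec_single_one, mulVec_mulVec,
      nonsing_inv_mul M ((isUnit_iff_isUnit_det M).mp hpd.isUnit), one_mulVec]
  have hAcol : 0 ≤ M⁻¹ *ᵥ M.col j := hcol ▸ Pi.single_nonneg.mpr zero_le_one
  have hcol0 : M.col j ≠ 0 := by
    intro h
    simpa [h] using congrFun hcol j
  have hcol_nonneg : 0 ≤ M.col j :=
    hpd.inv.nonneg_of_mulVec_nonneg (fun k l hkl => (hoff k l hkl).le) hAcol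
  exact pos_of_mulVec_nonneg hoff hcol_nonneg hcol0 hAcol i

/-- A symmetric positive definite matrix whose inverse is a complete M-matrix
(positive diagonal, strictly negative off-diagonal) has all entries strictly positive. -/
theorem inverse_M_matrix_implies_positive_entries
    {n : Type*} [Fintype n] [DecidableEq n]
    (M : Matrix n n ℝ) (hsym : M.IsSymm) (hpd : M.PosDef)
    (hdiag : ∀ i, 0 < M⁻¹ i i) (hoff : ∀ i j, i ≠ j → M⁻¹ i j < 0) :
    ∀ i j, 0 < M i j :=
  inverse_M_matrix_implies_positive_entries_general M hpd hoff
end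

section
/- If M is a symmetric positive definite matrix whose inverse is a complete M-matrix, then for every nonempty index subset a, the inverse of the principal submatrix M[a,a] is also a complete M-matrix. -/
/-!
Write `N = M⁻¹`. Deleting a single index `k` from a positive definite matrix inverts, on the
remaining indices, to the Schur complement `N i j - N i k * N k j / N k k` of `N k k` in `N`.
Its off-diagonal entries are negative: `N i j < 0`, while `N i k * N k j / N k k > 0`. Deleting
the indices outside `a` one at a time therefore keeps the inverse's off-diagonal entries
negative, and its diagonal entries are positive because `M[a,a]` is positive definite.
-/

open Matrix Finset

section SchurStep

variable {K m m' : Type*} [Field K] [Fintype m] [Fintype m'] [DecidableEq m] [DecidableEq m']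

theorem Matrix.inv_submatrix_of_range_eq_compl {A : Matrix m m K} (hA : IsUnit A.det) {k : m}
    (hk : A⁻¹ k k ≠ 0) {f : m' → m} (hf : Function.Injective f) (hrange : Set.range f = {k}ᶜ) :
    (A.submatrix f f)⁻¹ =
      of fun i j ↦ A⁻¹ (f i) (f j) - A⁻¹ (f i) k * A⁻¹ k (f j) / A⁻¹ k k := by
  set N := A⁻¹
  have hNA : N * A = 1 := nonsing_inv_mul A hA
  -- Column `k` of `T` vanishes, so sums over the range of `f` are sums over all of `m`.
  set T : Matrix m m K := of fun x y ↦ N x y - N x k * N k y / N k k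
  have hT_col : ∀ x, T x k = 0 := fun x ↦ by simp [T, hk]
  have hTA : ∀ x y, y ≠ k → (T * A) x y = (1 : Matrix m m K) x y := by
    intro x y hy
    have hcol : ∀ x, ∑ z, N x z * A z y = (1 : Matrix m m K) x y := fun x ↦ by
      rw [← hNA, mul_apply]
    calc (T * A) x y = ∑ z, N x z * A z y - N x k / N k k * ∑ z, N k z * A z y := by
          simp only [mul_apply, T, of_apply, Finset.mul_sum, ← Finset.sum_sub_distrib]
          exact Finset.sum_congr rfl fun z _ ↦ by ring
      _ = (1 : Matrix m m K) x y := by simp [hcol, one_apply_ne' hy]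
  have hfk : ∀ j, f j ≠ k := fun j ↦ by simpa using hrange.subset (Set.mem_range_self j)
  refine inv_eq_left_inv ?_
  ext i j
  calc (T.submatrix f f * A.submatrix f f) i j = (T * A) (f i) (f j) := by
        rw [mul_apply, mul_apply]
        refine Fintype.sum_of_injective f hf _ _ (fun x hx ↦ ?_) fun l ↦ rfl
        rw [hrange, Set.mem_compl_iff, not_not, Set.mem_singleton_iff] at hx
        simp [hx, hT_col]
    _ = (1 : Matrix m' m' K) i j := by simp [hTA _ _ (hfk j), one_apply, hf.eq_iff]

end SchurStep

def Matrix.OffDiagNeg {R m : Type*} [Zero R] [LT R] (A : Matrix m m R) : Prop :=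
  ∀ i j, i ≠ j → A i j < 0

section OffDiagNeg

variable {K m m' : Type*} [Field K] [LinearOrder K] [IsStrictOrderedRing K] [StarRing K]
  [Fintype m] [Fintype m'] [DecidableEq m] [DecidableEq m']

theorem Matrix.PosDef.offDiagNeg_inv_submatrix_of_range_eq_compl {A : Matrix m m K}
    (hA : A.PosDef) (hoff : A⁻¹.OffDiagNeg) {k : m} {f : m' → m}
    (hf : Function.Injective f) (hrange : Set.range f = {k}ᶜ) :
    (A.submatrix f f)⁻¹.OffDiagNeg := by
  have hkk : 0 < A⁻¹ k k := hA.inv.diag_pos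
  have hfk : ∀ j, f j ≠ k := fun j ↦ by simpa using hrange.subset (Set.mem_range_self j)
  intro i j hij
  rw [inv_submatrix_of_range_eq_compl ((isUnit_iff_isUnit_det A).mp hA.isUnit) hkk.ne' hf hrange,
    of_apply, sub_neg]
  calc A⁻¹ (f i) (f j) < 0 := hoff _ _ (hf.ne hij)
    _ < A⁻¹ (f i) k * A⁻¹ k (f j) / A⁻¹ k k :=
      div_pos (mul_pos_of_neg_of_neg (hoff _ _ (hfk i)) (hoff _ _ (hfk j).symm)) hkk

theorem Matrix.PosDef.offDiagNeg_inv_submatrix_compl {A : Matrix m m K} (hA : A.PosDef)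
    (hoff : A⁻¹.OffDiagNeg) (b : Finset m) :
    (A.submatrix (Subtype.val : ↥bᶜ → m) Subtype.val)⁻¹.OffDiagNeg := by
  induction b using Finset.induction_on with
  | empty =>
    let e : ↥(∅ : Finset m)ᶜ ≃ m := Equiv.subtypeUnivEquiv fun x ↦ by simp
    rw [show A.submatrix Subtype.val Subtype.val = A.submatrix e e from rfl,
      inv_submatrix_equiv]
    exact fun i j hij ↦ hoff _ _ (e.injective.ne hij)
  | insert k b hkb ih =>
    have hsub : (insert k b)ᶜ ⊆ bᶜ := compl_subset_compl.mpr (subset_insert k b)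
    refine (hA.submatrix Subtype.val_injective).offDiagNeg_inv_submatrix_of_range_eq_compl
      (k := ⟨k, mem_compl.mpr hkb⟩) (f := fun x : ↥(insert k b)ᶜ ↦ ⟨x, hsub x.2⟩) ih
      (fun _ _ h ↦ Subtype.ext (Subtype.mk.inj h)) ?_
    ext ⟨x, hx⟩
    simp [mem_compl.mp hx]

end OffDiagNeg

theorem principal_submatrix_inverse_M_matrix_general
    {n : Type*} [Fintype n] [DecidableEq n]
    (M : Matrix n n ℝ) (hpd : M.PosDef)
    (hoff : ∀ i j, i ≠ j → M⁻¹ i j < 0)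
    (a : Finset n) :
    (∀ i : a, 0 < (M.submatrix (Subtype.val : a → n) (Subtype.val : a → n))⁻¹ i i) ∧
    (∀ i j : a, i ≠ j →
      (M.submatrix (Subtype.val : a → n) (Subtype.val : a → n))⁻¹ i j < 0) := by
  obtain ⟨b, rfl⟩ : ∃ b, a = bᶜ := ⟨aᶜ, (compl_compl a).symm⟩
  exact ⟨fun i ↦ (hpd.submatrix Subtype.val_injective).inv.diag_pos,
    hpd.offDiagNeg_inv_submatrix_compl hoff b⟩

/-- If M is symmetric positive definite and M⁻¹ is a complete M-matrix, then the
inverse of every principal submatrix of M is also a complete M-matrix. -/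
theorem principal_submatrix_inverse_M_matrix
    {n : Type*} [Fintype n] [DecidableEq n]
    (M : Matrix n n ℝ) (hsym : M.IsSymm) (hpd : M.PosDef)
    (hdiag : ∀ i, 0 < M⁻¹ i i) (hoff : ∀ i j, i ≠ j → M⁻¹ i j < 0)
    (a : Finset n) (ha : a.Nonempty) :
    (∀ i : a, 0 < (M.submatrix (Subtype.val : a → n) (Subtype.val : a → n))⁻¹ i i) ∧
    (∀ i j : a, i ≠ j →
      (M.submatrix (Subtype.val : a → n) (Subtype.val : a → n))⁻¹ i j < 0) :=
  principal_submatrix_inverse_M_matrix_general M hpd hoff a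
end

section
/- Let λ ∈ ℝ^Q with 0 < λi < 1, Q ≥ 4, and P = Δ + λλᵀ. Then the matrix R with entries Rij = −(P⁻¹)ij/√((P⁻¹)ii·(P⁻¹)jj) for i ≠ j and Rii = 1 is a positive tetrad correlation matrix: 0 < Rij < 1 for i ≠ j, and Rih·Rjk = Rjh·Rik for all distinct i, j, h, k. -/
open Matrix

/-- The matrix of partial correlations R, with Rij = −(P⁻¹)ij/√((P⁻¹)ii(P⁻¹)jj) for
i ≠ j and unit diagonal, computed from the single-factor correlation matrix P,
is a positive tetrad correlation matrix. -/
theorem partial_correlations_form_positive_tetrad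
    (Q : ℕ) (hQ : 4 ≤ Q) (l : Fin Q → ℝ) (hl : ∀ i, 0 < l i ∧ l i < 1)
    (P : Matrix (Fin Q) (Fin Q) ℝ)
    (hP : P = Matrix.diagonal (fun i => 1 - (l i) ^ 2) + Matrix.vecMulVec l l)
    (R : Matrix (Fin Q) (Fin Q) ℝ)
    (hR : ∀ i j, R i j =
      if i = j then 1 else -(P⁻¹ i j) / Real.sqrt (P⁻¹ i i * P⁻¹ j j)) :
    (∀ i j, i ≠ j → 0 < R i j ∧ R i j < 1) ∧
    (∀ i j h k : Fin Q, i ≠ j → i ≠ h → i ≠ k → j ≠ h → j ≠ k → h ≠ k →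
      R i h * R j k = R j h * R i k) := by
  have hd : ∀ i, 0 < 1 - (l i) ^ 2 := fun i => by nlinarith [(hl i).1, (hl i).2]
  obtain ⟨u, hu⟩ : ∃ u : Fin Q → ℝ, ∀ i, u i = l i / (1 - l i ^ 2) :=
    ⟨_, fun i => rfl⟩
  have hupos : ∀ i, 0 < u i := fun i => (hu i) ▸ div_pos (hl i).1 (hd i)
  obtain ⟨c, hc⟩ : ∃ c : ℝ, c = 1 + ∑ k, l k * u k := ⟨_, rfl⟩
  have htpos : ∀ k, 0 < l k * u k := fun k => mul_pos (hl k).1 (hupos k)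
  have hcpos : 0 < c := by
    have : 0 ≤ ∑ k, l k * u k := Finset.sum_nonneg fun k _ => (htpos k).le
    linarith
  obtain ⟨M, hM⟩ : ∃ M : Matrix (Fin Q) (Fin Q) ℝ,
      ∀ i j, M i j = (if i = j then (1 - l i ^ 2)⁻¹ else 0) - u i * u j / c :=
    ⟨Matrix.of fun i j => (if i = j then (1 - l i ^ 2)⁻¹ else 0) - u i * u j / c,
      fun i j => by simp [Matrix.of_apply]⟩
  have hPM : P * M = 1 := by
    ext i j
    rw [Matrix.mul_apply, hP]
    simp only [Matrix.add_apply, Matrix.diagonal_apply, Matrix.vecMulVec_apply,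
      add_mul, ite_mul, zero_mul, mul_assoc]
    rw [Finset.sum_add_distrib, Finset.sum_ite_eq, ← Finset.mul_sum]
    have hsum : ∑ k, l k * M k j = u j / c := by
      have : ∀ k : Fin Q, l k * M k j =
          (if k = j then l k * (1 - l k ^ 2)⁻¹ else 0) - (l k * u k) * (u j / c) := by
        intro k
        simp only [hM, mul_sub, mul_ite, mul_zero, mul_div_assoc, mul_assoc]
      rw [Finset.sum_congr rfl fun k _ => this k, Finset.sum_sub_distrib,
        Finset.sum_ite_eq', ← Finset.sum_mul]
      have huj : l j * (1 - l j ^ 2)⁻¹ = u j := by rw [hu]; exact (div_eq_mul_inv _ _).symm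
      simp only [Finset.mem_univ, if_true, huj]
      have hS : ∑ k, l k * u k = c - 1 := by rw [hc]; ring
      rw [hS]
      field_simp
      ring
    rw [hsum]
    simp only [Finset.mem_univ, if_true, hM]
    have hdu : (1 - l i ^ 2) * u i = l i := by
      rw [hu]
      rw [mul_div_assoc', mul_comm, mul_div_assoc, div_self (hd i).ne', mul_one]
    by_cases hij : i = j
    · subst hij
      simp only [eq_self_iff_true, if_true, Matrix.one_apply_eq]
      have h2 : (1 - l i ^ 2) * (u i * u i / c) = l i * (u i / c) := by
        conv_rhs => rw [← hdu]
        ring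
      rw [mul_sub, h2, mul_inv_cancel₀ (hd i).ne']
      ring
    · simp only [if_neg hij, Matrix.one_apply_ne hij]
      have h2 : (1 - l i ^ 2) * (u i * u j / c) = l i * (u j / c) := by
        conv_rhs => rw [← hdu]
        ring
      rw [zero_sub, mul_neg, h2]
      ring
  have hPinv : P⁻¹ = M := Matrix.inv_eq_right_inv hPM
  have hdu : ∀ i, (1 - l i ^ 2) * u i = l i := by
    intro i
    rw [hu]
    rw [mul_div_assoc', mul_comm, mul_div_assoc, div_self (hd i).ne', mul_one]
  have hsq : ∀ i, u i * u i * (1 - l i ^ 2) = l i * u i := by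
    intro i
    linear_combination u i * hdu i
  have hc1 : ∀ i, 1 + l i * u i ≤ c := by
    intro i
    rw [hc]
    have : l i * u i ≤ ∑ k, l k * u k :=
      Finset.single_le_sum (fun k _ => (htpos k).le) (Finset.mem_univ i)
    linarith
  have hc2 : ∀ i j, i ≠ j → 1 + (l i * u i + l j * u j) ≤ c := by
    intro i j hij
    rw [hc]
    have hsub : ({i, j} : Finset (Fin Q)) ⊆ Finset.univ := Finset.subset_univ _
    have := Finset.sum_le_sum_of_subset_of_nonneg hsub
      (fun k _ _ => (htpos k).le)
    rw [Finset.sum_pair hij] at this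
    linarith
  have hDval : ∀ i, P⁻¹ i i = (c - l i * u i) / ((1 - l i ^ 2) * c) := by
    intro i
    rw [hPinv, hM i i, if_pos rfl]
    rw [inv_eq_one_div, div_sub_div _ _ (hd i).ne' hcpos.ne', one_mul]
    congr 1
    linear_combination -(u i * hdu i)
  have hDpos : ∀ i, 0 < P⁻¹ i i := by
    intro i
    rw [hDval i]
    exact div_pos (by linarith [hc1 i]) (mul_pos (hd i) hcpos)
  have hoff : ∀ i j, i ≠ j → P⁻¹ i j = -(u i * u j / c) := by
    intro i j hij
    rw [hPinv, hM i j, if_neg hij, zero_sub]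
  have hRval : ∀ i j, i ≠ j → R i j =
      (u i * u j / c) / (Real.sqrt (P⁻¹ i i) * Real.sqrt (P⁻¹ j j)) := by
    intro i j hij
    rw [hR, if_neg hij, hoff i j hij, neg_neg, Real.sqrt_mul (hDpos i).le]
  constructor
  · intro i j hij
    have hs : 0 < Real.sqrt (P⁻¹ i i) * Real.sqrt (P⁻¹ j j) :=
      mul_pos (Real.sqrt_pos.2 (hDpos i)) (Real.sqrt_pos.2 (hDpos j))
    have hnum : 0 < u i * u j / c := div_pos (mul_pos (hupos i) (hupos j)) hcpos
    constructor
    · rw [hRval i j hij]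
      exact div_pos hnum hs
    · rw [hRval i j hij, ← Real.sqrt_mul (hDpos i).le]
      rw [div_lt_one (Real.sqrt_pos.2 (mul_pos (hDpos i) (hDpos j)))]
      rw [show Real.sqrt (P⁻¹ i i * P⁻¹ j j) = Real.sqrt (P⁻¹ i i * P⁻¹ j j) from rfl]
      rw [Real.lt_sqrt hnum.le]
      rw [hDval i, hDval j, div_pow, div_mul_div_comm]
      rw [div_lt_div_iff₀ (by positivity) (mul_pos (mul_pos (hd i) hcpos) (mul_pos (hd j) hcpos))]
      have e1 : (u i * u j) ^ 2 * ((1 - l i ^ 2) * c * ((1 - l j ^ 2) * c))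
          = (l i * u i) * (l j * u j) * c ^ 2 := by
        linear_combination (u j ^ 2 * (1 - l j ^ 2) * c ^ 2) * hsq i
          + (l i * u i * c ^ 2) * hsq j
      have hfin : 0 < c ^ 3 * (c - l i * u i - l j * u j) :=
        mul_pos (pow_pos hcpos 3) (by linarith [hc2 i j hij])
      nlinarith [e1, hfin]
  · intro i j h k hij hih hik hjh hjk hhk
    rw [hRval i h hih, hRval j k hjk, hRval j h hjh, hRval i k hik]
    have si := (Real.sqrt_pos.2 (hDpos i)).ne'
    have sj := (Real.sqrt_pos.2 (hDpos j)).ne'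
    have sh := (Real.sqrt_pos.2 (hDpos h)).ne'
    have sk := (Real.sqrt_pos.2 (hDpos k)).ne'
    rw [div_mul_div_comm, div_mul_div_comm]
    congr 1 <;> ring
end

section
/- Let A, B, L be binary random variables with A ⫫ B | L and all marginals strictly in (0,1). Then the Pearson correlation satisfies ρ(A,B) = ρ(A,L)·ρ(L,B). -/
/-- For binary A, B, L with A ⫫ B | L and nondegenerate marginals, the Pearson
correlations multiply along the source V: ρ(A,B) = ρ(A,L)·ρ(L,B).
Here π i j l = P(A=i, B=j, L=l) and for binary variables
ρ(X,Y) = (P(X=1,Y=1) − P(X=1)P(Y=1))/√(P(X=1)(1−P(X=1))P(Y=1)(1−P(Y=1))). -/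
theorem binary_correlation_multiplies_over_latent
    (π : Fin 2 → Fin 2 → Fin 2 → ℝ)
    (hnn : ∀ i j l, 0 ≤ π i j l)
    (hsum : ∑ i, ∑ j, ∑ l, π i j l = 1)
    (pA pB pL : ℝ)
    (hpA : pA = ∑ j, ∑ l, π 1 j l) (hpB : pB = ∑ i, ∑ l, π i 1 l)
    (hpL : pL = ∑ i, ∑ j, π i j 1)
    (hA : 0 < pA ∧ pA < 1) (hB : 0 < pB ∧ pB < 1) (hLm : 0 < pL ∧ pL < 1)
    (hci : ∀ i j l, π i j l * (∑ i', ∑ j', π i' j' l) =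
      (∑ j', π i j' l) * (∑ i', π i' j l))
    (ρAB ρAL ρLB : ℝ)
    (hρAB : ρAB = ((∑ l, π 1 1 l) - pA * pB) /
      Real.sqrt (pA * (1 - pA) * (pB * (1 - pB))))
    (hρAL : ρAL = ((∑ j, π 1 j 1) - pA * pL) /
      Real.sqrt (pA * (1 - pA) * (pL * (1 - pL))))
    (hρLB : ρLB = ((∑ i, π i 1 1) - pL * pB) /
      Real.sqrt (pL * (1 - pL) * (pB * (1 - pB)))) :
    ρAB = ρAL * ρLB := by
  obtain ⟨hA1, hA2⟩ := hA
  obtain ⟨hB1, hB2⟩ := hB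
  obtain ⟨hL1, hL2⟩ := hLm
  have hc110 := hci 1 1 0
  have hc111 := hci 1 1 1
  simp only [Fin.sum_univ_two] at hsum hpA hpB hpL hc110 hc111 hρAB hρAL hρLB
  have hvA0 : 0 < pA * (1 - pA) := by apply mul_pos hA1; linarith
  have hvB0 : 0 < pB * (1 - pB) := by apply mul_pos hB1; linarith
  have hvL0 : 0 < pL * (1 - pL) := by apply mul_pos hL1; linarith
  -- the square roots combine
  have hsq : Real.sqrt (pA * (1 - pA) * (pL * (1 - pL))) *
      Real.sqrt (pL * (1 - pL) * (pB * (1 - pB))) =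
      pL * (1 - pL) * Real.sqrt (pA * (1 - pA) * (pB * (1 - pB))) := by
    rw [← Real.sqrt_mul (by positivity)]
    have h : pA * (1 - pA) * (pL * (1 - pL)) * (pL * (1 - pL) * (pB * (1 - pB)))
        = (pL * (1 - pL)) ^ 2 * (pA * (1 - pA) * (pB * (1 - pB))) := by ring
    rw [h, Real.sqrt_mul (sq_nonneg _), Real.sqrt_sq hvL0.le]
  -- the covariances multiply
  have hkey : ((π 1 1 0 + π 1 1 1) - pA * pB) * (pL * (1 - pL)) =
      ((π 1 0 1 + π 1 1 1) - pA * pL) * ((π 0 1 1 + π 1 1 1) - pL * pB) := by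
    subst hpA hpB hpL
    linear_combination (π 0 0 1 + π 0 1 1 + (π 1 0 1 + π 1 1 1)) * hc110
      + (1 - (π 0 0 1 + π 0 1 1 + (π 1 0 1 + π 1 1 1))) * hc111
      - (π 0 0 1 + π 0 1 1 + (π 1 0 1 + π 1 1 1)) * π 1 1 0 * hsum
  rw [hρAB, hρAL, hρLB, div_mul_div_comm, hsq, ← hkey]
  rw [div_eq_div_iff (by positivity) (by positivity)]
  ring
end

section
/- Let X1, ..., XQ be binary random variables (Q ≥ 4) that are mutually conditionally independent given a binary variable L, with all marginals strictly in (0,1), and suppose each correlation ρ(Xi, L) satisfies 0 < ρ(Xi, L) < 1. Then the correlation matrix P of X1,...,XQ is a positive tetrad correlation matrix: 0 < ρ(Xi,Xj) < 1 for i ≠ j and ρ(Xi,Xh)·ρ(Xj,Xk) = ρ(Xj,Xh)·ρ(Xi,Xk) for all distinct i,j,h,k. -/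
/-!
Conditional independence given the binary latent `L` gives
`cov(Xᵢ, Xⱼ) · Var(L) = cov(Xᵢ, L) · cov(Xⱼ, L)`, i.e. `ρ(Xᵢ, Xⱼ) = ρ(Xᵢ, L) · ρ(Xⱼ, L)`.
The off-diagonal correlations are therefore products of two numbers in `(0, 1)`, and a rank-one
pattern `ρ i j = a i * a j` makes every tetrad vanish.
-/

/-- For `X, Y` conditionally independent given a binary `L` with `P(L = l) = p l`,
`P(X = 1 | L = l) = a l` and `P(Y = 1 | L = l) = b l`, this is
`cov(X, Y) · Var(L) = cov(X, L) · cov(Y, L)`. -/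
theorem binary_mixture_cov_mul_var (p a b : Fin 2 → ℝ) (hp : p 0 + p 1 = 1) :
    ((∑ l, p l * a l * b l) - (∑ l, p l * a l) * (∑ l, p l * b l)) * (p 1 * (1 - p 1)) =
      (p 1 * a 1 - (∑ l, p l * a l) * p 1) * (p 1 * b 1 - (∑ l, p l * b l) * p 1) := by
  have hp0 : p 0 = 1 - p 1 := by linarith
  simp only [Fin.sum_univ_two, hp0]
  ring

theorem div_sqrt_mul_eq_mul_of_mul_eq {c cx cy vx vy v : ℝ} (hvx : 0 < vx) (hvy : 0 < vy)
    (hv : 0 < v) (h : c * v = cx * cy) :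
    c / √(vx * vy) = cx / √(vx * v) * (cy / √(vy * v)) := by
  have hsv : √v ^ 2 = v := Real.sq_sqrt hv.le
  have := Real.sqrt_pos.mpr hvx
  have := Real.sqrt_pos.mpr hvy
  have := Real.sqrt_pos.mpr hv
  rw [Real.sqrt_mul hvx.le, Real.sqrt_mul hvy.le, Real.sqrt_mul hvx.le]
  field_simp
  rw [hsv]
  linear_combination h

theorem binary_star_graph_positive_tetrad_general
    (Q : ℕ)
    (pL : Fin 2 → ℝ) (q : Fin Q → Fin 2 → Fin 2 → ℝ)
    (hpLsum : pL 0 + pL 1 = 1)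
    (m : Fin Q → ℝ) (hm : ∀ i, m i = ∑ l, pL l * q i 1 l)
    (mL : ℝ) (hmL : mL = pL 1)
    (hmarg : ∀ i, 0 < m i ∧ m i < 1) (hmargL : 0 < mL ∧ mL < 1)
    (ρL : Fin Q → ℝ)
    (hρL : ∀ i, ρL i = (pL 1 * q i 1 1 - m i * mL) /
      Real.sqrt (m i * (1 - m i) * (mL * (1 - mL))))
    (hρLpos : ∀ i, 0 < ρL i ∧ ρL i < 1)
    (ρ : Fin Q → Fin Q → ℝ)
    (hρ : ∀ i j, ρ i j = ((∑ l, pL l * q i 1 l * q j 1 l) - m i * m j) /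
      Real.sqrt (m i * (1 - m i) * (m j * (1 - m j)))) :
    (∀ i j, i ≠ j → 0 < ρ i j ∧ ρ i j < 1) ∧
    (∀ i j h k : Fin Q, i ≠ j → i ≠ h → i ≠ k → j ≠ h → j ≠ k → h ≠ k →
      ρ i h * ρ j k = ρ j h * ρ i k) := by
  have hvar : ∀ i, 0 < m i * (1 - m i) := fun i ↦
    mul_pos (hmarg i).1 (sub_pos.mpr (hmarg i).2)
  have hvarL : 0 < mL * (1 - mL) := mul_pos hmargL.1 (sub_pos.mpr hmargL.2)
  have hρ_eq : ∀ i j, ρ i j = ρL i * ρL j := fun i j ↦ by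
    rw [hρ, hρL, hρL]
    refine div_sqrt_mul_eq_mul_of_mul_eq (hvar i) (hvar j) hvarL ?_
    simpa only [hm, hmL] using binary_mixture_cov_mul_var pL (q i 1) (q j 1) hpLsum
  refine ⟨fun i j _ ↦ ?_, fun i j h k _ _ _ _ _ _ ↦ ?_⟩
  · rw [hρ_eq]
    exact ⟨mul_pos (hρLpos i).1 (hρLpos j).1,
      mul_lt_one_of_nonneg_of_lt_one_left (hρLpos i).1.le (hρLpos i).2 (hρLpos j).2.le⟩
  · simp only [hρ_eq]
    ring

/-- Q ≥ 4 binary items mutually conditionally independent given a binary L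
(joint factorizes as P(L)·∏ P(Xi|L)), with nondegenerate marginals and proper
positive correlations 0 < ρ(Xi,L) < 1, have a positive tetrad correlation matrix:
0 < ρ(Xi,Xj) < 1 for i ≠ j and vanishing tetrads. -/
theorem binary_star_graph_positive_tetrad
    (Q : ℕ) (hQ : 4 ≤ Q)
    (pL : Fin 2 → ℝ) (q : Fin Q → Fin 2 → Fin 2 → ℝ)
    (hpLnn : ∀ l, 0 ≤ pL l) (hpLsum : pL 0 + pL 1 = 1)
    (hqnn : ∀ i x l, 0 ≤ q i x l) (hqsum : ∀ i l, q i 0 l + q i 1 l = 1)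
    (m : Fin Q → ℝ) (hm : ∀ i, m i = ∑ l, pL l * q i 1 l)
    (mL : ℝ) (hmL : mL = pL 1)
    (hmarg : ∀ i, 0 < m i ∧ m i < 1) (hmargL : 0 < mL ∧ mL < 1)
    (ρL : Fin Q → ℝ)
    (hρL : ∀ i, ρL i = (pL 1 * q i 1 1 - m i * mL) /
      Real.sqrt (m i * (1 - m i) * (mL * (1 - mL))))
    (hρLpos : ∀ i, 0 < ρL i ∧ ρL i < 1)
    (ρ : Fin Q → Fin Q → ℝ)
    (hρ : ∀ i j, ρ i j = ((∑ l, pL l * q i 1 l * q j 1 l) - m i * m j) /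
      Real.sqrt (m i * (1 - m i) * (m j * (1 - m j)))) :
    (∀ i j, i ≠ j → 0 < ρ i j ∧ ρ i j < 1) ∧
    (∀ i j h k : Fin Q, i ≠ j → i ≠ h → i ≠ k → j ≠ h → j ≠ k → h ≠ k →
      ρ i h * ρ j k = ρ j h * ρ i k) :=
  binary_star_graph_positive_tetrad_general Q pL q hpLsum m hm mL hmL hmarg hmargL ρL hρL hρLpos ρ
    hρ
end

section
/- For binary variables A, B, L with A ⫫ B | L, if ρ(A,L) ≠ 0 and ρ(B,L) ≠ 0, then ρ(A,B) = ρ(A,L)·ρ(B,L) ≠ 0, so A and B are marginally dependent (singleton transitivity for binary star graphs). -/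
/-- Singleton transitivity for binary star graphs: for binary A, B, L with
A ⫫ B | L, if ρ(A,L) ≠ 0 and ρ(B,L) ≠ 0 then ρ(A,B) = ρ(A,L)·ρ(B,L) ≠ 0,
so A and B are marginally dependent. -/
theorem binary_singleton_transitivity
    (π : Fin 2 → Fin 2 → Fin 2 → ℝ)
    (hnn : ∀ i j l, 0 ≤ π i j l)
    (hsum : ∑ i, ∑ j, ∑ l, π i j l = 1)
    (pA pB pL : ℝ)
    (hpA : pA = ∑ j, ∑ l, π 1 j l) (hpB : pB = ∑ i, ∑ l, π i 1 l)
    (hpL : pL = ∑ i, ∑ j, π i j 1)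
    (hA : 0 < pA ∧ pA < 1) (hB : 0 < pB ∧ pB < 1) (hLm : 0 < pL ∧ pL < 1)
    (hci : ∀ i j l, π i j l * (∑ i', ∑ j', π i' j' l) =
      (∑ j', π i j' l) * (∑ i', π i' j l))
    (ρAB ρAL ρBL : ℝ)
    (hρAB : ρAB = ((∑ l, π 1 1 l) - pA * pB) /
      Real.sqrt (pA * (1 - pA) * (pB * (1 - pB))))
    (hρAL : ρAL = ((∑ j, π 1 j 1) - pA * pL) /
      Real.sqrt (pA * (1 - pA) * (pL * (1 - pL))))
    (hρBL : ρBL = ((∑ i, π i 1 1) - pB * pL) /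
      Real.sqrt (pB * (1 - pB) * (pL * (1 - pL))))
    (hAL : ρAL ≠ 0) (hBL : ρBL ≠ 0) :
    ρAB = ρAL * ρBL ∧ ρAB ≠ 0 := by
  obtain ⟨hA0, hA1⟩ := hA
  obtain ⟨hB0, hB1⟩ := hB
  obtain ⟨hL0, hL1⟩ := hLm
  have h0 := hci 1 1 0
  have h1 := hci 1 1 1
  simp only [Fin.sum_univ_two] at hsum hρAB hρAL hρBL h0 h1 hpA hpB hpL
  -- covariance identity
  have key : ((π 1 1 0 + π 1 1 1) - pA * pB) * (pL * (1 - pL)) =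
      ((π 1 0 1 + π 1 1 1) - pA * pL) * ((π 0 1 1 + π 1 1 1) - pB * pL) := by
    subst hpA hpB hpL
    linear_combination (1 - (π 0 0 1 + π 0 1 1 + (π 1 0 1 + π 1 1 1))) * h1 +
      (π 0 0 1 + π 0 1 1 + (π 1 0 1 + π 1 1 1)) * h0 -
      π 1 1 0 * (π 0 0 1 + π 0 1 1 + (π 1 0 1 + π 1 1 1)) * hsum
  have vApos : (0:ℝ) < pA * (1 - pA) := mul_pos hA0 (by linarith)
  have vBpos : (0:ℝ) < pB * (1 - pB) := mul_pos hB0 (by linarith)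
  have vLpos : (0:ℝ) < pL * (1 - pL) := mul_pos hL0 (by linarith)
  set sA := Real.sqrt (pA * (1 - pA)) with hsA
  set sB := Real.sqrt (pB * (1 - pB)) with hsB
  set sL := Real.sqrt (pL * (1 - pL)) with hsL
  have sApos : 0 < sA := Real.sqrt_pos.2 vApos
  have sBpos : 0 < sB := Real.sqrt_pos.2 vBpos
  have sLpos : 0 < sL := Real.sqrt_pos.2 vLpos
  have sL2 : sL * sL = pL * (1 - pL) := Real.mul_self_sqrt vLpos.le
  have eAB : Real.sqrt (pA * (1 - pA) * (pB * (1 - pB))) = sA * sB :=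
    Real.sqrt_mul vApos.le _
  have eAL : Real.sqrt (pA * (1 - pA) * (pL * (1 - pL))) = sA * sL :=
    Real.sqrt_mul vApos.le _
  have eBL : Real.sqrt (pB * (1 - pB) * (pL * (1 - pL))) = sB * sL :=
    Real.sqrt_mul vBpos.le _
  rw [eAB] at hρAB
  rw [eAL] at hρAL
  rw [eBL] at hρBL
  have hmain : ρAB = ρAL * ρBL := by
    rw [hρAB, hρAL, hρBL, div_mul_div_comm]
    rw [div_eq_div_iff (by positivity) (by positivity)]
    linear_combination sA * sB * key +
      ((π 1 1 0 + π 1 1 1) - pA * pB) * sA * sB * sL2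
  exact ⟨hmain, hmain ▸ mul_ne_zero hAL hBL⟩
end

section
/- Let S be a Q×Q symmetric matrix with unit diagonal and off-diagonal entries sij with 0 < sij < 1, Q ≥ 4, satisfying the tetrad conditions sih·sjk = sjh·sik for all distinct i,j,h,k. Then there exists a vector λ ∈ ℝ^Q with λi > 0 such that sij = λi·λj for all i ≠ j (namely λi = √(sij·sik/sjk) for any distinct j, k ≠ i, which is well-defined independently of the choice of j, k). -/
/-!
For distinct `i, j, k` put `r i j k = S i j * S i k / S j k`. The tetrad conditions let one
replace either of `j, k` by another index at a time without changing `r i j k`, so `r i j k`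
depends on `i` alone; this is `λ i ^ 2`. For `i ≠ j` and a third index `k`,
`r i j k * r j i k = S i j ^ 2`, hence `S i j = λ i * λ j`.
-/

namespace Matrix

variable {ι : Type*}

def SatisfiesTetrads (S : Matrix ι ι ℝ) : Prop :=
  ∀ i j h k, i ≠ j → i ≠ h → i ≠ k → j ≠ h → j ≠ k → h ≠ k → S i h * S j k = S j h * S i k

noncomputable def tetradRatio (S : Matrix ι ι ℝ) (i j k : ι) : ℝ :=
  S i j * S i k / S j k

variable {S : Matrix ι ι ℝ} {i j k j' k' : ι}

lemma tetradRatio_comm (hS : S.IsSymm) (i j k : ι) :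
    S.tetradRatio i j k = S.tetradRatio i k j := by
  rw [tetradRatio, tetradRatio, hS.apply k j, mul_comm]

lemma tetradRatio_pos (hpos : ∀ i j, i ≠ j → 0 < S i j) (hij : i ≠ j) (hik : i ≠ k)
    (hjk : j ≠ k) : 0 < S.tetradRatio i j k :=
  div_pos (mul_pos (hpos i j hij) (hpos i k hik)) (hpos j k hjk)

lemma tetradRatio_eq_of_ne (hpos : ∀ i j, i ≠ j → 0 < S i j) (ht : S.SatisfiesTetrads)
    (hij : i ≠ j) (hik : i ≠ k) (hjk : j ≠ k) (hik' : i ≠ k') (hjk' : j ≠ k') :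
    S.tetradRatio i j k = S.tetradRatio i j k' := by
  rcases eq_or_ne k k' with rfl | hkk'
  · rfl
  rw [tetradRatio, tetradRatio, div_eq_div_iff (hpos j k hjk).ne' (hpos j k' hjk').ne']
  linear_combination S i j * ht i j k k' hij hik hik' hjk hjk' hkk'

lemma tetradRatio_eq (hS : S.IsSymm) (hpos : ∀ i j, i ≠ j → 0 < S i j)
    (ht : S.SatisfiesTetrads) (hij : i ≠ j) (hik : i ≠ k) (hjk : j ≠ k) (hij' : i ≠ j')
    (hik' : i ≠ k') (hjk' : j' ≠ k') :
    S.tetradRatio i j k = S.tetradRatio i j' k' := by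
  rcases eq_or_ne k' j with rfl | hk'j
  · calc S.tetradRatio i k' k = S.tetradRatio i k' j' :=
          tetradRatio_eq_of_ne hpos ht hij hik hjk hij' hjk'.symm
      _ = S.tetradRatio i j' k' := tetradRatio_comm hS i k' j'
  · calc S.tetradRatio i j k = S.tetradRatio i j k' :=
          tetradRatio_eq_of_ne hpos ht hij hik hjk hik' hk'j.symm
      _ = S.tetradRatio i k' j := tetradRatio_comm hS i j k'
      _ = S.tetradRatio i k' j' :=
          tetradRatio_eq_of_ne hpos ht hik' hij hk'j hij' hjk'.symm
      _ = S.tetradRatio i j' k' := tetradRatio_comm hS i k' j'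

lemma tetradRatio_mul_tetradRatio_swap (hS : S.IsSymm) (hik : S i k ≠ 0) (hjk : S j k ≠ 0) :
    S.tetradRatio i j k * S.tetradRatio j i k = S i j ^ 2 := by
  rw [tetradRatio, tetradRatio, hS.apply i j]
  field_simp

theorem exists_pos_offDiag_eq_mul_of_satisfiesTetrads (h3 : 3 ≤ ENat.card ι) (hS : S.IsSymm)
    (hpos : ∀ i j, i ≠ j → 0 < S i j) (ht : S.SatisfiesTetrads) :
    ∃ lam : ι → ℝ, (∀ i, 0 < lam i) ∧ ∀ i j, i ≠ j → S i j = lam i * lam j := by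
  have hpair : ∀ i, ∃ p : ι × ι, i ≠ p.1 ∧ i ≠ p.2 ∧ p.1 ≠ p.2 := by
    intro i
    obtain ⟨j, hji, -⟩ := ENat.exists_ne_ne_of_three_le h3 i i
    obtain ⟨k, hki, hkj⟩ := ENat.exists_ne_ne_of_three_le h3 i j
    exact ⟨(j, k), hji.symm, hki.symm, hkj.symm⟩
  choose p hp using hpair
  refine ⟨fun i => √(S.tetradRatio i (p i).1 (p i).2),
    fun i => Real.sqrt_pos.mpr (tetradRatio_pos hpos (hp i).1 (hp i).2.1 (hp i).2.2),
    fun i j hij => ?_⟩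
  obtain ⟨k, hki, hkj⟩ := ENat.exists_ne_ne_of_three_le h3 i j
  have hri : S.tetradRatio i (p i).1 (p i).2 = S.tetradRatio i j k :=
    tetradRatio_eq hS hpos ht (hp i).1 (hp i).2.1 (hp i).2.2 hij hki.symm hkj.symm
  have hrj : S.tetradRatio j (p j).1 (p j).2 = S.tetradRatio j i k :=
    tetradRatio_eq hS hpos ht (hp j).1 (hp j).2.1 (hp j).2.2 hij.symm hkj.symm hki.symm
  dsimp only
  rw [hri, hrj, ← Real.sqrt_mul (tetradRatio_pos hpos hij hki.symm hkj.symm).le,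
    tetradRatio_mul_tetradRatio_swap hS (hpos i k hki.symm).ne' (hpos j k hkj.symm).ne',
    Real.sqrt_sq (hpos i j hij).le]

end Matrix

theorem positive_tetrad_matrix_rank_one_general
    (Q : ℕ) (hQ : 4 ≤ Q) (S : Matrix (Fin Q) (Fin Q) ℝ)
    (hsym : S.IsSymm)
    (hoff : ∀ i j, i ≠ j → 0 < S i j ∧ S i j < 1)
    (htetrad : ∀ i j h k : Fin Q, i ≠ j → i ≠ h → i ≠ k → j ≠ h → j ≠ k → h ≠ k →
      S i h * S j k = S j h * S i k) :
    ∃ lam : Fin Q → ℝ, (∀ i, 0 < lam i) ∧ ∀ i j, i ≠ j → S i j = lam i * lam j :=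
  S.exists_pos_offDiag_eq_mul_of_satisfiesTetrads (by simpa using hQ.trans' (by norm_num)) hsym
    (fun i j hij => (hoff i j hij).1) htetrad

/-- A positive tetrad correlation matrix has rank-one off-diagonal part: there is
a positive vector λ with sij = λi·λj for all i ≠ j. -/
theorem positive_tetrad_matrix_rank_one
    (Q : ℕ) (hQ : 4 ≤ Q) (S : Matrix (Fin Q) (Fin Q) ℝ)
    (hsym : S.IsSymm) (hdiag : ∀ i, S i i = 1)
    (hoff : ∀ i j, i ≠ j → 0 < S i j ∧ S i j < 1)
    (htetrad : ∀ i j h k : Fin Q, i ≠ j → i ≠ h → i ≠ k → j ≠ h → j ≠ k → h ≠ k →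
      S i h * S j k = S j h * S i k) :
    ∃ lam : Fin Q → ℝ, (∀ i, 0 < lam i) ∧ ∀ i j, i ≠ j → S i j = lam i * lam j :=
  positive_tetrad_matrix_rank_one_general Q hQ S hsym hoff htetrad
end
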